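/- If x, y ∈ {0,1}^{n²/4} are interpreted as (n/2)×(n/2) binary matrices A', B', and A, B are the block matrices A = [[A', I],[0,0]], B = [[I, 0],[B', 0]], then ‖AB‖_∞ = 2 if there exists a coordinate at which both x and y equal 1, and ‖AB‖_∞ ≤ 1 otherwise. -/

import Mathlib

open Matrix

/-!
The product collapses to `fromBlocks (A' + B') 0 0 0`, so its largest entry is the largest entry
of `A' + B'`; for `0/1` matrices this is `2` exactly when some position carries a `1` in both.
-/

theorem fromBlocks_one_mul_fromBlocks_one {n R : Type*} [Fintype n] [DecidableEq n]
    [NonAssocSemiring R] (A B : Matrix n n R) :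
    (fromBlocks A 1 0 0 : Matrix (n ⊕ n) (n ⊕ n) R) * fromBlocks 1 0 B 0 =
      fromBlocks (A + B) 0 0 0 := by
  simp [fromBlocks_multiply]

section SupNatAbs

variable {n o : Type*} [Fintype n] [Fintype o] (M : Matrix n n ℤ)

theorem natAbs_le_sup_natAbs_fromBlocks (i j : n) :
    (M i j).natAbs ≤
      Finset.univ.sup (fun p : (n ⊕ o) × (n ⊕ o) => (fromBlocks M 0 0 0 p.1 p.2).natAbs) :=
  Finset.le_sup (f := fun p : (n ⊕ o) × (n ⊕ o) => (fromBlocks M 0 0 0 p.1 p.2).natAbs)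
    (Finset.mem_univ (Sum.inl i, Sum.inl j))

theorem sup_natAbs_fromBlocks_le {k : ℕ} (h : ∀ i j, (M i j).natAbs ≤ k) :
    Finset.univ.sup (fun p : (n ⊕ o) × (n ⊕ o) => (fromBlocks M 0 0 0 p.1 p.2).natAbs) ≤ k := by
  refine Finset.sup_le ?_
  rintro ⟨i | i, j | j⟩ - <;> simp [h]

end SupNatAbs

theorem natAbs_add_le_two_of_zero_or_one {a b : ℤ} (ha : a = 0 ∨ a = 1) (hb : b = 0 ∨ b = 1) :
    (a + b).natAbs ≤ 2 := by
  rcases ha with rfl | rfl <;> rcases hb with rfl | rfl <;> decide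

theorem natAbs_add_le_one_of_zero_or_one {a b : ℤ} (ha : a = 0 ∨ a = 1) (hb : b = 0 ∨ b = 1)
    (hab : ¬(a = 1 ∧ b = 1)) : (a + b).natAbs ≤ 1 := by
  rcases ha with rfl | rfl <;> rcases hb with rfl | rfl <;> simp_all

theorem stmt_5 (m : ℕ) (A' B' : Matrix (Fin m) (Fin m) ℤ)
    (hA : ∀ i j, A' i j = 0 ∨ A' i j = 1) (hB : ∀ i j, B' i j = 0 ∨ B' i j = 1) :
    (∀ C, C = (fromBlocks A' 1 0 0) * (fromBlocks 1 0 B' 0) →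
      ((∃ i j, A' i j = 1 ∧ B' i j = 1) →
        Finset.univ.sup (fun p : (Fin m ⊕ Fin m) × (Fin m ⊕ Fin m) =>
          (C p.1 p.2).natAbs) = 2) ∧
      (¬ (∃ i j, A' i j = 1 ∧ B' i j = 1) →
        Finset.univ.sup (fun p : (Fin m ⊕ Fin m) × (Fin m ⊕ Fin m) =>
          (C p.1 p.2).natAbs) ≤ 1)) := by
  intro C hC
  -- `C` is elaborated as a `CStarMatrix`, a type synonym of `Matrix` with the same product.
  replace hC : C = fromBlocks (A' + B') 0 0 0 := hC.trans (fromBlocks_one_mul_fromBlocks_one A' B')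
  subst hC
  refine ⟨fun ⟨i, j, hAij, hBij⟩ => le_antisymm ?_ ?_, fun hdisj => ?_⟩
  · exact sup_natAbs_fromBlocks_le _ fun i j => natAbs_add_le_two_of_zero_or_one (hA i j) (hB i j)
  · simpa [hAij, hBij] using natAbs_le_sup_natAbs_fromBlocks (o := Fin m) (A' + B') i j
  · exact sup_natAbs_fromBlocks_le _ fun i j =>
      natAbs_add_le_one_of_zero_or_one (hA i j) (hB i j) fun h => hdisj ⟨i, j, h⟩
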